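/- If φ(x) = f(x,x) − (1−x)·f_x(x,x) is strictly increasing on [0,1], f is symmetric and C¹, then the maximizer of Π(x̃) = ∫_{x̃}^1 (f(x,x) + f(x̃,x̃)) dx over [0,1] is unique. -/

import Mathlib

theorem optimal_exclusion_unique
    (f : ℝ → ℝ → ℝ)
    (hf_symm : ∀ x y, f x y = f y x)
    (hf_nonneg : ∀ x y, 0 ≤ f x y)
    (hcont : Continuous (fun x => f x x))
    (fx fy : ℝ → ℝ → ℝ)
    (hdiag : ∀ x : ℝ, HasDerivAt (fun s => f s s) (fx x x + fy x x) x)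
    (hsymm_deriv : ∀ x : ℝ, fx x x = fy x x)
    (hpos : 0 < ∫ x in (0:ℝ)..1, f x x)
    (hφ : StrictMonoOn (fun x => f x x - (1 - x) * fx x x) (Set.Icc (0:ℝ) 1))
    (Prof : ℝ → ℝ)
    (hProf : ∀ xt : ℝ, Prof xt = ∫ x in xt..1, (f x x + f xt xt)) :
    ∀ x₁ ∈ Set.Icc (0:ℝ) 1, ∀ x₂ ∈ Set.Icc (0:ℝ) 1,
      IsMaxOn Prof (Set.Icc (0:ℝ) 1) x₁ → IsMaxOn Prof (Set.Icc (0:ℝ) 1) x₂ →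
        x₁ = x₂ := by
  -- rewrite Prof
  have hProf' : ∀ t : ℝ, Prof t = (∫ x in t..1, f x x) + (1 - t) * f t t := by
    intro t
    rw [hProf t, intervalIntegral.integral_add (hcont.intervalIntegrable t 1)
      (intervalIntegrable_const), intervalIntegral.integral_const]
    simp [smul_eq_mul]
  -- Prof has derivative -2*φ t at each t
  have hD : ∀ t : ℝ, HasDerivAt Prof
      (-2 * (f t t - (1 - t) * fx t t)) t := by
    intro t
    have h1 : HasDerivAt (fun u => ∫ x in u..1, f x x) (-(f t t)) t :=
      intervalIntegral.integral_hasDerivAt_left (hcont.intervalIntegrable t 1)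
        (hcont.stronglyMeasurableAtFilter _ _) hcont.continuousAt
    have h2 := (((hasDerivAt_id t).const_sub 1)).mul (hdiag t)
    simp only [id] at h2
    have := h1.add h2
    have heq : (fun u => (∫ x in u..1, f x x) + (1 - u) * f u u) = Prof := by
      funext u; rw [hProf' u]
    change HasDerivAt (fun u => (∫ x in u..1, f x x) + (1 - u) * f u u) _ t at this
    rw [heq] at this
    convert this using 1
    rw [hsymm_deriv t]; ring
  -- Prof is continuous
  have hProfCont : Continuous Prof :=
    continuous_iff_continuousAt.2 fun t => (hD t).continuousAt
  -- Prof is strictly concave on Icc 0 1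
  have hconc : StrictConcaveOn ℝ (Set.Icc (0:ℝ) 1) Prof := by
    apply StrictAntiOn.strictConcaveOn_of_deriv (convex_Icc 0 1) hProfCont.continuousOn
    intro a ha b hb hab
    rw [(hD a).deriv, (hD b).deriv]
    rw [interior_Icc] at ha hb
    have := hφ (Set.Ioo_subset_Icc_self ha) (Set.Ioo_subset_Icc_self hb) hab
    simp only at this
    nlinarith
  intro x₁ hx₁ x₂ hx₂ h₁ h₂
  by_contra hne
  have heq : Prof x₁ = Prof x₂ := le_antisymm (h₂ hx₁) (h₁ hx₂)
  have hmid := hconc.2 hx₁ hx₂ hne (show (0:ℝ) < 1/2 by norm_num)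
    (show (0:ℝ) < 1/2 by norm_num) (show (1/2:ℝ) + 1/2 = 1 by norm_num)
  have hmem : (1/2 : ℝ) • x₁ + (1/2 : ℝ) • x₂ ∈ Set.Icc (0:ℝ) 1 :=
    (convex_Icc 0 1) hx₁ hx₂ (by norm_num) (by norm_num) (by norm_num)
  have := h₁ hmem
  simp only [smul_eq_mul, Set.mem_setOf_eq] at hmid this
  linarith [heq ▸ hmid]
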